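/- arXiv:2008.13543 — 2 statements merged into one kernel-verified Lean document; each statement's English description precedes it below -/
import Mathlib

section
/- The partial indices n_j in a Birkhoff factorization of a continuous invertible matrix function M on the unit circle are not unique in general, but their sum ∑ n_j is uniquely determined by M: it equals the winding number of det M(z) around 0. -/
/-!
On the unit circle `det M(e^{iθ}) = det A₊(e^{iθ}) · e^{iNθ} · det B(e^{-iθ})` with `N = ∑ nⱼ`.
The two outer factors are continuous and nonvanishing on the closed disc, which is contractible,
so they have continuous logarithms on the whole disc and contribute nothing to the change of a
logarithm around the circle; the middle factor contributes `2πiN`. Two continuous logarithms of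
the same function on `ℝ` differ by a constant, so `g (2π) - g 0 = 2πiN` as well.
-/

open Real

theorem Convex.exists_continuousOn_eqOn_exp_comp {E : Type*} [AddCommGroup E] [Module ℝ E]
    [TopologicalSpace E] [IsTopologicalAddGroup E] [ContinuousSMul ℝ E] [LocallyConvexSpace ℝ E]
    {S : Set E} (hS : Convex ℝ S) {f : E → ℂ} (hfc : ContinuousOn f S) (hf₀ : ∀ x ∈ S, f x ≠ 0) :
    ∃ L : E → ℂ, ContinuousOn L S ∧ Set.EqOn (Complex.exp ∘ L) f S := by
  classical
  rcases S.eq_empty_or_nonempty with rfl | ⟨x₀, hx₀⟩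
  · exact ⟨0, continuousOn_empty _, Set.eqOn_empty _ _⟩
  have := hS.contractibleSpace ⟨x₀, hx₀⟩
  have := hS.locallyPathConnectedSpace
  obtain ⟨F, ⟨-, hF⟩, -⟩ := Complex.isCoveringMapOn_exp.existsUnique_continuousMap_lifts
    ⟨S.domRestrict f, hfc.domRestrict⟩ (a₀ := ⟨x₀, hx₀⟩) (Complex.exp_log (hf₀ x₀ hx₀))
    (fun x ↦ hf₀ x x.2)
  refine ⟨fun x ↦ if hx : x ∈ S then F ⟨x, hx⟩ else 0, ?_, fun x hx ↦ ?_⟩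
  · rw [continuousOn_iff_continuous_domRestrict]
    convert F.continuous with x
    simp
  · simpa [hx] using congr_fun hF ⟨x, hx⟩

theorem Complex.sub_eq_sub_of_exp_eq_exp {X : Type*} [TopologicalSpace X] [PreconnectedSpace X]
    {g G : X → ℂ} (hg : Continuous g) (hG : Continuous G) (h : ∀ x, exp (g x) = exp (G x))
    (a b : X) : g b - g a = G b - G a := by
  have := isCoveringMap_exp.const_of_comp (hg.sub hG)
    (fun x y ↦ Subtype.ext (by simp [exp_sub, h])) b a
  simp only [Pi.sub_apply] at this
  linear_combination this

theorem ContinuousOn.matrix_det {X R ι : Type*} [TopologicalSpace X] [Fintype ι] [DecidableEq ι]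
    [CommRing R] [TopologicalSpace R] [IsTopologicalRing R] {A : X → Matrix ι ι R} {s : Set X}
    (hA : ContinuousOn A s) : ContinuousOn (fun x ↦ (A x).det) s :=
  continuous_id.matrix_det.comp_continuousOn hA

theorem Matrix.det_mul_diagonal_exp_zpow_mul {ι : Type*} [Fintype ι] [DecidableEq ι]
    (A B : Matrix ι ι ℂ) (k : ι → ℤ) (x : ℂ) :
    (A * diagonal (fun j ↦ Complex.exp x ^ k j) * B).det =
      A.det * Complex.exp ((∑ j, k j) * x) * B.det := by
  simp only [det_mul, det_diagonal, ← Complex.exp_int_mul, ← Complex.exp_sum, Int.cast_sum,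
    Finset.sum_mul]

theorem Convex.exists_continuousOn_log_det {E ι : Type*} [AddCommGroup E] [Module ℝ E]
    [TopologicalSpace E] [IsTopologicalAddGroup E] [ContinuousSMul ℝ E] [LocallyConvexSpace ℝ E]
    [Fintype ι] [DecidableEq ι] {S : Set E} (hS : Convex ℝ S) {A : E → Matrix ι ι ℂ}
    (hAc : ∀ i j, ContinuousOn (fun x ↦ A x i j) S) (hAinv : ∀ x ∈ S, IsUnit (A x)) :
    ∃ L : E → ℂ, ContinuousOn L S ∧ Set.EqOn (Complex.exp ∘ L) (fun x ↦ (A x).det) S :=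
  hS.exists_continuousOn_eqOn_exp_comp
    (continuousOn_pi.mpr fun i ↦ continuousOn_pi.mpr (hAc i)).matrix_det
    fun x hx ↦ ((Matrix.isUnit_iff_isUnit_det _).mp (hAinv x hx)).ne_zero

theorem birkhoff_sum_partial_indices_eq_winding_general (n : ℕ) (M : ℂ → Matrix (Fin n) (Fin n) ℂ)
    -- a Birkhoff factorization `M = A₊ D A₋`, with `B w = A₋ (1/w)`:
    (Ap B : ℂ → Matrix (Fin n) (Fin n) ℂ) (ind : Fin n → ℤ)
    (hApc : ∀ i j, ContinuousOn (fun z => Ap z i j) (Metric.closedBall (0 : ℂ) 1))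
    (hApinv : ∀ z ∈ Metric.closedBall (0 : ℂ) 1, IsUnit (Ap z))
    (hBc : ∀ i j, ContinuousOn (fun w => B w i j) (Metric.closedBall (0 : ℂ) 1))
    (hBinv : ∀ w ∈ Metric.closedBall (0 : ℂ) 1, IsUnit (B w))
    (hfact : ∀ z ∈ Metric.sphere (0 : ℂ) 1,
      M z = Ap z * Matrix.diagonal (fun j => z ^ (ind j)) * B z⁻¹)
    -- a continuous logarithm of `det M` along the circle and the winding number `w`:
    (g : ℝ → ℂ) (hg : Continuous g)
    (hlog : ∀ θ : ℝ, Complex.exp (g θ) = (M (Complex.exp (θ * Complex.I))).det)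
    (w : ℤ) (hw : g (2 * π) - g 0 = 2 * π * Complex.I * w) :
    (∑ j, ind j) = w := by
  obtain ⟨La, hLac, hLa⟩ := (convex_closedBall (0 : ℂ) 1).exists_continuousOn_log_det hApc hApinv
  obtain ⟨Lb, hLbc, hLb⟩ := (convex_closedBall (0 : ℂ) 1).exists_continuousOn_log_det hBc hBinv
  set z : ℝ → ℂ := fun θ ↦ Complex.exp (θ * Complex.I)
  have hzc : Continuous z := by fun_prop
  have hz (θ : ℝ) : z θ ∈ Metric.closedBall (0 : ℂ) 1 := by simp [z]
  have hz_inv (θ : ℝ) : (z θ)⁻¹ ∈ Metric.closedBall (0 : ℂ) 1 := by simp [z]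
  set G : ℝ → ℂ := fun θ ↦ La (z θ) + (∑ j, ind j : ℤ) * (θ * Complex.I) + Lb (z θ)⁻¹
  have hGc : Continuous G :=
    ((hLac.comp_continuous hzc hz).add (by fun_prop)).add
      (hLbc.comp_continuous (hzc.inv₀ fun θ ↦ Complex.exp_ne_zero _) hz_inv)
  have hexp (θ : ℝ) : Complex.exp (g θ) = Complex.exp (G θ) := by
    have ha : Complex.exp (La (z θ)) = (Ap (z θ)).det := hLa (hz θ)
    have hb : Complex.exp (Lb (z θ)⁻¹) = (B (z θ)⁻¹).det := hLb (hz_inv θ)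
    rw [hlog, hfact _ (by simp), Matrix.det_mul_diagonal_exp_zpow_mul, Complex.exp_add,
      Complex.exp_add, ha, hb]
  have hG : G (2 * π) - G 0 = 2 * π * Complex.I * (∑ j, ind j : ℤ) := by
    simp only [G, z, Complex.ofReal_mul, Complex.ofReal_ofNat, Complex.exp_two_pi_mul_I,
      Complex.ofReal_zero, zero_mul, Complex.exp_zero, mul_zero, add_zero]
    ring
  have hgG := (Complex.sub_eq_sub_of_exp_eq_exp hg hGc hexp 0 (2 * π)).trans hG
  exact_mod_cast (mul_left_cancel₀ Complex.two_pi_I_ne_zero (hw.symm.trans hgG)).symm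

/-- The sum of the partial indices in a Birkhoff factorization of `M` equals the winding
number of `det M` around `0`, expressed via a continuous logarithm `g` of
`θ ↦ det M (exp (iθ))`: the winding number is `w` where `g (2π) - g 0 = 2πi·w`. -/
theorem birkhoff_sum_partial_indices_eq_winding (n : ℕ) (M : ℂ → Matrix (Fin n) (Fin n) ℂ)
    (hMc : ∀ i j, ContinuousOn (fun z => M z i j) (Metric.sphere (0 : ℂ) 1))
    (hMinv : ∀ z ∈ Metric.sphere (0 : ℂ) 1, IsUnit (M z))
    -- a Birkhoff factorization `M = A₊ D A₋`, with `B w = A₋ (1/w)`: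
    (Ap B : ℂ → Matrix (Fin n) (Fin n) ℂ) (ind : Fin n → ℤ)
    (hApc : ∀ i j, ContinuousOn (fun z => Ap z i j) (Metric.closedBall (0 : ℂ) 1))
    (hApd : ∀ i j, DifferentiableOn ℂ (fun z => Ap z i j) (Metric.ball (0 : ℂ) 1))
    (hApinv : ∀ z ∈ Metric.closedBall (0 : ℂ) 1, IsUnit (Ap z))
    (hBc : ∀ i j, ContinuousOn (fun w => B w i j) (Metric.closedBall (0 : ℂ) 1))
    (hBd : ∀ i j, DifferentiableOn ℂ (fun w => B w i j) (Metric.ball (0 : ℂ) 1))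
    (hBinv : ∀ w ∈ Metric.closedBall (0 : ℂ) 1, IsUnit (B w))
    (hfact : ∀ z ∈ Metric.sphere (0 : ℂ) 1,
      M z = Ap z * Matrix.diagonal (fun j => z ^ (ind j)) * B z⁻¹)
    -- a continuous logarithm of `det M` along the circle and the winding number `w`:
    (g : ℝ → ℂ) (hg : Continuous g)
    (hlog : ∀ θ : ℝ, Complex.exp (g θ) = (M (Complex.exp (θ * Complex.I))).det)
    (w : ℤ) (hw : g (2 * π) - g 0 = 2 * π * Complex.I * w) :
    (∑ j, ind j) = w :=
  birkhoff_sum_partial_indices_eq_winding_general n M Ap B ind hApc hApinv hBc hBinv hfact g hg hlog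
    w hw
end

section
/- Let U ⊆ ℂ be a connected open set, X a Banach space, and P : U → B(X) a holomorphic family of projections (P(t)² = P(t) for all t ∈ U). Then the ranges of P(t) for different t ∈ U are all isomorphic as Banach spaces; more precisely, for any t₀ ∈ U there is a neighborhood V of t₀ and a holomorphic family S : V → B(X) of invertible operators with S(t) (range P(t₀)) = range P(t). -/
/-!
Kato's transformation `Q(t) = P(t) P(t₀) + (1 - P(t)) (1 - P(t₀))` is holomorphic in `t`, equals `1`
at `t₀` and satisfies `Q(t) P(t₀) = P(t) Q(t)`. Hence on the open neighbourhood of `t₀` where `Q(t)`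
is invertible, it carries the range of `P(t₀)` onto the range of `P(t)`. So isomorphism of ranges is
an equivalence relation on `U` whose classes are open, and connectedness leaves only one class.
-/

open Set

section Ring

variable {R : Type*} [Ring R]

def idempotentIntertwiner (p q : R) : R := q * p + (1 - q) * (1 - p)

variable {p q : R}

theorem idempotentIntertwiner_self (hp : IsIdempotentElem p) : idempotentIntertwiner p p = 1 := by
  simp only [idempotentIntertwiner, mul_sub, sub_mul, mul_one, one_mul, hp.eq]
  abel

theorem idempotentIntertwiner_mul (hp : IsIdempotentElem p) (hq : IsIdempotentElem q) :
    idempotentIntertwiner p q * p = q * idempotentIntertwiner p q := by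
  simp only [idempotentIntertwiner, add_mul, mul_add, mul_sub, sub_mul, mul_one, one_mul,
    mul_assoc, hp.eq, ← mul_assoc q q p, hq.eq]
  abel

end Ring

theorem Function.Surjective.image_range_of_semiconj {α β : Type*} {u : α → β} {p : α → α}
    {q : β → β} (hu : u.Surjective) (h : Function.Semiconj u p q) : u '' range p = range q := by
  rw [← Set.range_comp u p, h.comp_eq, Set.range_comp, hu.range_eq, image_univ]

theorem ContinuousLinearMap.exists_equiv_eq_of_isUnit {R M α : Type*} [Semiring R]
    [AddCommMonoid M] [TopologicalSpace M] [Module R M] (f : α → M →L[R] M) :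
    ∃ S : α → M ≃L[R] M, ∀ a, IsUnit (f a) → (S a : M →L[R] M) = f a := by
  classical
  refine ⟨fun a => if h : IsUnit (f a) then ContinuousLinearEquiv.unitsEquiv R M h.unit
    else .refl R M, fun a h => ?_⟩
  simp only [dif_pos h]
  rfl

section Local

variable {𝕜 E X : Type*} [NontriviallyNormedField 𝕜] [NormedAddCommGroup E] [NormedSpace 𝕜 E]
  [NormedAddCommGroup X] [NormedSpace 𝕜 X] [CompleteSpace X]

theorem exists_differentiableOn_equiv_image_range_eq {U : Set E} (hU : IsOpen U)
    {P : E → X →L[𝕜] X} (hP : DifferentiableOn 𝕜 P U) (hproj : ∀ t ∈ U, IsIdempotentElem (P t))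
    {t₀ : E} (ht₀ : t₀ ∈ U) :
    ∃ V : Set E, IsOpen V ∧ t₀ ∈ V ∧ V ⊆ U ∧
      ∃ S : E → X ≃L[𝕜] X, DifferentiableOn 𝕜 (fun t => (S t : X →L[𝕜] X)) V ∧
        ∀ t ∈ V, (S t : X → X) '' (LinearMap.range (P t₀ : X →ₗ[𝕜] X) : Set X)
          = (LinearMap.range (P t : X →ₗ[𝕜] X) : Set X) := by
  set Q : E → X →L[𝕜] X := fun t => idempotentIntertwiner (P t₀) (P t)
  have hQ : DifferentiableOn 𝕜 Q U :=
    (hP.mul_const _).add (((differentiableOn_const _).sub hP).mul_const _)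
  obtain ⟨S, hSQ⟩ := ContinuousLinearMap.exists_equiv_eq_of_isUnit Q
  refine ⟨U ∩ Q ⁻¹' {f | IsUnit f}, hQ.continuousOn.isOpen_inter_preimage hU Units.isOpen,
    ⟨ht₀, by simp [Q, idempotentIntertwiner_self (hproj t₀ ht₀)]⟩, inter_subset_left, S,
    (hQ.mono inter_subset_left).congr fun t ht => hSQ t ht.2, fun t ht => ?_⟩
  have hmul : (S t : X →L[𝕜] X) * P t₀ = P t * S t := by
    rw [hSQ t ht.2]
    exact idempotentIntertwiner_mul (hproj t₀ ht₀) (hproj t ht.1)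
  have hcomm : Function.Semiconj (S t) (P t₀) (P t) := fun x => congr($hmul x)
  simpa only [LinearMap.coe_range, ContinuousLinearMap.coe_coe] using
    (S t).surjective.image_range_of_semiconj hcomm

end Local

/-- For a holomorphic family `P` of projections on a Banach space over a connected open
set `U ⊆ ℂ`, the ranges `P(t)(X)` are all isomorphic; more precisely, near any `t₀ ∈ U`
there is a holomorphic family of invertible operators carrying `range P(t₀)` to
`range P(t)`. -/
theorem holomorphic_family_of_projections_ranges {X : Type*} [NormedAddCommGroup X]
    [NormedSpace ℂ X] [CompleteSpace X] (U : Set ℂ) (hU : IsOpen U) (hUconn : IsConnected U)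
    (P : ℂ → X →L[ℂ] X) (hP : DifferentiableOn ℂ P U)
    (hproj : ∀ t ∈ U, P t ∘L P t = P t) :
    (∀ s ∈ U, ∀ t ∈ U,
        Nonempty (LinearMap.range (P s : X →ₗ[ℂ] X) ≃L[ℂ] LinearMap.range (P t : X →ₗ[ℂ] X))) ∧
      ∀ t₀ ∈ U, ∃ V : Set ℂ, IsOpen V ∧ t₀ ∈ V ∧ V ⊆ U ∧
        ∃ S : ℂ → X ≃L[ℂ] X,
          DifferentiableOn ℂ (fun t => (S t : X →L[ℂ] X)) V ∧
          ∀ t ∈ V, (S t : X → X) '' (LinearMap.range (P t₀ : X →ₗ[ℂ] X) : Set X)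
            = (LinearMap.range (P t : X →ₗ[ℂ] X) : Set X) := by
  have hlocal := fun (t₀ : ℂ) (ht₀ : t₀ ∈ U) =>
    exists_differentiableOn_equiv_image_range_eq hU hP hproj ht₀
  refine ⟨fun s hs t ht => ?_, hlocal⟩
  refine hUconn.isPreconnected.induction₂
    (fun s t =>
      Nonempty (LinearMap.range (P s : X →ₗ[ℂ] X) ≃L[ℂ] LinearMap.range (P t : X →ₗ[ℂ] X)))
    (fun t₀ ht₀ => ?_)
    (fun _ _ _ _ _ _ ⟨e⟩ ⟨e'⟩ => ⟨e.trans e'⟩) (fun _ _ _ _ ⟨e⟩ => ⟨e.symm⟩) hs ht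
  obtain ⟨V, hV, ht₀V, -, S, -, hS⟩ := hlocal t₀ ht₀
  filter_upwards [nhdsWithin_le_nhds (hV.mem_nhds ht₀V)] with t ht
  exact ⟨(S t).ofSubmodules _ _ (SetLike.coe_injective ((Submodule.map_coe _ _).trans (hS t ht)))⟩
end
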